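/- Let X be a vector space with a complete invariant metric d and f : [a,b] → X a function. Then f is Darboux integrable (for every ε > 0 there exists a partition Δ_ε of [a,b] such that ω(f, Δ) < ε for every partition Δ refining Δ_ε) if and only if f is bounded and continuous almost everywhere on [a,b] (with respect to Lebesgue measure). -/

import Mathlib

/-!
Everything is controlled by the sets `D_c = {t ∈ [a,b] | c ≤ ω(f,t)}`. A point of `D_c` that is not
a partition point lies in the interior of a piece, whose oscillation is then at least `c`; hence
`c · |D_c| ≤ ω(f,Δ)` for every partition `Δ`, so Darboux integrability makes every `D_c`, and with
them the discontinuity set `⋃ₙ D_{1/n}`, null.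

Conversely, cover the null discontinuity set by an open set `U` of small measure. On the compact
set `[a,b] \ U` the oscillation vanishes, hence is uniformly small at some scale `δ`. In a partition
of mesh `< δ` the pieces meeting `[a,b] \ U` then have small oscillation, and the remaining pieces
lie in `U`, so their total length is at most `|U|` and they contribute at most
`diam f([a,b]) · |U|`. Refining a partition of mesh `< δ` keeps the mesh `< δ`.
-/

open Set MeasureTheory

/-- A tagged partition of `[a,b]`: points `a = t 0 < t 1 < ⋯ < t n = b`
with tags `s i ∈ [t i, t (i+1)]`. -/
structure TaggedPartition (a b : ℝ) where
  n : ℕ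
  t : ℕ → ℝ
  s : ℕ → ℝ
  npos : 0 < n
  left : t 0 = a
  right : t n = b
  mono : ∀ i < n, t i < t (i + 1)
  tag_mem : ∀ i < n, s i ∈ Set.Icc (t i) (t (i + 1))

/-- The mesh of the partition is `< δ`. -/
def TaggedPartition.MeshLT {a b : ℝ} (P : TaggedPartition a b) (δ : ℝ) : Prop :=
  ∀ i < P.n, P.t (i + 1) - P.t i < δ

/-- The set of partition points of a tagged partition. -/
def TaggedPartition.points {a b : ℝ} (P : TaggedPartition a b) : Set ℝ :=
  {x | ∃ i ≤ P.n, P.t i = x}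

/-- The Riemann sum `f(Δ) = Σᵢ (tᵢ₊₁ - tᵢ) • f(sᵢ)`. -/
def riemannSum {X : Type*} [AddCommGroup X] [Module ℝ X]
    (f : ℝ → X) {a b : ℝ} (P : TaggedPartition a b) : X :=
  ∑ i ∈ Finset.range P.n, (P.t (i + 1) - P.t i) • f (P.s i)

/-- `f` has Riemann integral `x` on `[a,b]` (mesh-based definition, metric `dist`). -/
def HasRiemannIntegral {X : Type*} [MetricSpace X] [AddCommGroup X] [Module ℝ X]
    (f : ℝ → X) (a b : ℝ) (x : X) : Prop :=
  ∀ ε > 0, ∃ δ > 0, ∀ P : TaggedPartition a b, P.MeshLT δ →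
    dist (riemannSum f P) x < ε

/-- The oscillation sum `ω(f,Δ) = Σᵢ ω(f,[tᵢ,tᵢ₊₁])·(tᵢ₊₁ − tᵢ)` of `f` over a
partition (tags are irrelevant), where the oscillation over an interval is the
diameter of the image. -/
noncomputable def oscSum {X : Type*} [MetricSpace X]
    (f : ℝ → X) {a b : ℝ} (P : TaggedPartition a b) : ENNReal :=
  ∑ i ∈ Finset.range P.n,
    EMetric.diam (f '' Set.Icc (P.t i) (P.t (i + 1))) * ENNReal.ofReal (P.t (i + 1) - P.t i)

/-- `f` is Darboux integrable on `[a,b]`: for every `ε > 0` there is a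
partition such that every refining partition has oscillation sum `< ε`. -/
def DarbouxIntegrable {X : Type*} [MetricSpace X] (f : ℝ → X) (a b : ℝ) : Prop :=
  ∀ ε : ℝ, 0 < ε → ∃ P₀ : TaggedPartition a b, ∀ P : TaggedPartition a b,
    P₀.points ⊆ P.points → oscSum f P < ENNReal.ofReal ε

open Metric
open scoped ENNReal

namespace TaggedPartition

variable {a b : ℝ} (P : TaggedPartition a b)

theorem strictMonoOn_t : StrictMonoOn P.t (Iic P.n) :=
  strictMonoOn_Iic_of_lt_succ P.mono

theorem monotoneOn_t : MonotoneOn P.t (Iic P.n) :=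
  P.strictMonoOn_t.monotoneOn

theorem t_mem_Icc {i : ℕ} (hi : i ≤ P.n) : P.t i ∈ Icc a b :=
  ⟨P.left.symm.trans_le (P.monotoneOn_t (mem_Iic.2 P.n.zero_le) hi i.zero_le),
    (P.monotoneOn_t hi self_mem_Iic hi).trans_eq P.right⟩

theorem Icc_subset {i : ℕ} (hi : i < P.n) : Icc (P.t i) (P.t (i + 1)) ⊆ Icc a b :=
  Icc_subset_Icc (P.t_mem_Icc hi.le).1 (P.t_mem_Icc hi).2

theorem exists_mem_Ioc {x : ℝ} (hx : x ∈ Ioc a b) :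
    ∃ i < P.n, x ∈ Ioc (P.t i) (P.t (i + 1)) := by
  classical
  have hxn : x ≤ P.t P.n := hx.2.trans_eq P.right.symm
  have hex : ∃ j, x ≤ P.t j := ⟨P.n, hxn⟩
  have hle : Nat.find hex ≤ P.n := Nat.find_min' hex hxn
  obtain ⟨i, hi⟩ : ∃ i, Nat.find hex = i + 1 := Nat.exists_eq_succ_of_ne_zero fun h0 => by
    have := Nat.find_spec hex
    rw [h0, P.left] at this
    exact hx.1.not_ge this
  have hxi : x ≤ P.t (i + 1) := hi ▸ Nat.find_spec hex
  exact ⟨i, by omega, not_le.1 (Nat.find_min hex (by omega)), hxi⟩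

theorem exists_mem_Ioo_of_notMem_points {x : ℝ} (hx : x ∈ Icc a b) (hp : x ∉ P.points) :
    ∃ i < P.n, x ∈ Ioo (P.t i) (P.t (i + 1)) := by
  have hax : a < x := hx.1.lt_of_ne fun h => hp ⟨0, Nat.zero_le _, P.left.trans h⟩
  obtain ⟨i, hi, hxi⟩ := P.exists_mem_Ioc ⟨hax, hx.2⟩
  exact ⟨i, hi, hxi.1, hxi.2.lt_of_ne fun h => hp ⟨i + 1, hi, h.symm⟩⟩

theorem Icc_subset_biUnion_Icc :
    Icc a b ⊆ ⋃ i ∈ Finset.range P.n, Icc (P.t i) (P.t (i + 1)) := by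
  intro x hx
  rcases hx.1.eq_or_lt with hax | hax
  · have hx0 : P.t 0 = x := P.left.trans hax
    exact mem_biUnion (Finset.mem_range.2 P.npos)
      ⟨hx0.le, hx0.symm.le.trans (P.mono 0 P.npos).le⟩
  · obtain ⟨i, hi, hxi⟩ := P.exists_mem_Ioc ⟨hax, hx.2⟩
    exact mem_biUnion (Finset.mem_range.2 hi) (Ioc_subset_Icc_self hxi)

theorem points_finite : P.points.Finite :=
  (finite_Iic P.n).image P.t

theorem pairwiseDisjoint_Ioc :
    (Finset.range P.n : Set ℕ).PairwiseDisjoint fun i => Ioc (P.t i) (P.t (i + 1)) := by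
  have key : ∀ i j, i < j → j < P.n →
      Disjoint (Ioc (P.t i) (P.t (i + 1))) (Ioc (P.t j) (P.t (j + 1))) := fun i j hij hj =>
    Ioc_disjoint_Ioc_of_le (P.monotoneOn_t (Nat.succ_le_of_lt (hij.trans hj)) hj.le hij)
  intro i hi j hj hij
  simp only [Finset.coe_range, mem_Iio] at hi hj
  rcases hij.lt_or_gt with h | h
  · exact key i j h hj
  · exact (key j i h hi).symm

theorem sum_length_le_volume {s : Finset ℕ} (hs : s ⊆ Finset.range P.n) {T : Set ℝ}
    (hT : ∀ i ∈ s, Ioc (P.t i) (P.t (i + 1)) ⊆ T) :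
    ∑ i ∈ s, ENNReal.ofReal (P.t (i + 1) - P.t i) ≤ volume T :=
  calc ∑ i ∈ s, ENNReal.ofReal (P.t (i + 1) - P.t i)
      = volume (⋃ i ∈ s, Ioc (P.t i) (P.t (i + 1))) := by
        rw [measure_biUnion_finset (P.pairwiseDisjoint_Ioc.subset (Finset.coe_subset.2 hs))
          fun _ _ => measurableSet_Ioc]
        simp only [Real.volume_Ioc]
    _ ≤ volume T := measure_mono (iUnion₂_subset hT)

theorem sum_mul_length_le {s : Finset ℕ} (hs : s ⊆ Finset.range P.n) {T : Set ℝ}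
    (hT : ∀ i ∈ s, Ioc (P.t i) (P.t (i + 1)) ⊆ T) {g : ℕ → ℝ≥0∞} {C : ℝ≥0∞}
    (hg : ∀ i ∈ s, g i ≤ C) :
    ∑ i ∈ s, g i * ENNReal.ofReal (P.t (i + 1) - P.t i) ≤ C * volume T :=
  calc ∑ i ∈ s, g i * ENNReal.ofReal (P.t (i + 1) - P.t i)
      ≤ ∑ i ∈ s, C * ENNReal.ofReal (P.t (i + 1) - P.t i) :=
        Finset.sum_le_sum fun i hi => by gcongr; exact hg i hi
    _ = C * ∑ i ∈ s, ENNReal.ofReal (P.t (i + 1) - P.t i) := (Finset.mul_sum _ _ _).symm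
    _ ≤ C * volume T := by gcongr; exact P.sum_length_le_volume hs hT

theorem exists_Icc_subset_of_points_subset {P₀ : TaggedPartition a b}
    (h : P₀.points ⊆ P.points) {j : ℕ} (hj : j < P.n) :
    ∃ i < P₀.n, Icc (P.t j) (P.t (j + 1)) ⊆ Icc (P₀.t i) (P₀.t (i + 1)) := by
  set m := (P.t j + P.t (j + 1)) / 2
  have hjm : P.t j < m := left_lt_add_div_two.2 (P.mono j hj)
  have hmj : m < P.t (j + 1) := add_div_two_lt_right.2 (P.mono j hj)
  obtain ⟨i, hi, hmi⟩ := P₀.exists_mem_Ioc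
    ⟨(P.t_mem_Icc hj.le).1.trans_lt hjm, hmj.le.trans (P.t_mem_Icc hj).2⟩
  obtain ⟨k, hk, hk_eq⟩ := h ⟨i, hi.le, rfl⟩
  obtain ⟨l, hl, hl_eq⟩ := h ⟨i + 1, hi, rfl⟩
  have hkj : k < j + 1 :=
    (P.strictMonoOn_t.lt_iff_lt hk hj).1 (hk_eq.trans_lt (hmi.1.trans hmj))
  have hjl : j < l :=
    (P.strictMonoOn_t.lt_iff_lt hj.le hl).1 ((hjm.trans_le hmi.2).trans_eq hl_eq.symm)
  exact ⟨i, hi, Icc_subset_Icc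
    (hk_eq.symm.trans_le (P.monotoneOn_t hk hj.le (Nat.lt_succ_iff.1 hkj)))
    ((P.monotoneOn_t hj hl hjl).trans_eq hl_eq)⟩

theorem MeshLT.of_points_subset {P₀ : TaggedPartition a b} {δ : ℝ} (hδ : P₀.MeshLT δ)
    (h : P₀.points ⊆ P.points) : P.MeshLT δ := fun j hj => by
  obtain ⟨i, hi, hsub⟩ := P.exists_Icc_subset_of_points_subset h hj
  have := (Icc_subset_Icc_iff (P.mono j hj).le).1 hsub
  linarith [hδ i hi]

theorem exists_meshLT (hab : a < b) {δ : ℝ} (hδ : 0 < δ) :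
    ∃ P : TaggedPartition a b, P.MeshLT δ := by
  obtain ⟨N, hN⟩ := exists_nat_gt ((b - a) / δ)
  have hNpos : (0 : ℝ) < N := (div_pos (sub_pos.2 hab) hδ).trans hN
  have hstep : 0 < (b - a) / N := div_pos (sub_pos.2 hab) hNpos
  let P : TaggedPartition a b :=
    { n := N
      t := fun i => a + i * ((b - a) / N)
      s := fun i => a + i * ((b - a) / N)
      npos := by exact_mod_cast hNpos
      left := by simp
      right := by field_simp; ring
      mono := fun i _ => by push_cast; linarith
      tag_mem := fun i _ => ⟨le_rfl, by push_cast; linarith⟩ }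
  refine ⟨P, fun i _ => ?_⟩
  have : (b - a) / N < δ := by
    rw [div_lt_iff₀ hNpos]; rw [div_lt_iff₀ hδ] at hN; linarith
  simp only [P]
  push_cast
  linarith

end TaggedPartition

section

variable {X : Type*} [MetricSpace X] {f : ℝ → X} {a b : ℝ}

-- `oscSum` is written with `EMetric.diam`, a deprecated alias that `rw` does not unfold.
theorem oscSum_eq_sum_ediam (P : TaggedPartition a b) :
    oscSum f P = ∑ i ∈ Finset.range P.n,
      ediam (f '' Icc (P.t i) (P.t (i + 1))) * ENNReal.ofReal (P.t (i + 1) - P.t i) :=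
  rfl

theorem mul_volume_le_oscSum (P : TaggedPartition a b) (c : ℝ≥0∞) :
    c * volume {t ∈ Icc a b | c ≤ oscillationWithin f (Icc a b) t} ≤ oscSum f P := by
  classical
  set bad := (Finset.range P.n).filter fun i => c ≤ ediam (f '' Icc (P.t i) (P.t (i + 1)))
  have hcover : {t ∈ Icc a b | c ≤ oscillationWithin f (Icc a b) t} ⊆
      P.points ∪ ⋃ i ∈ bad, Icc (P.t i) (P.t (i + 1)) := by
    rintro x ⟨hx, hcx⟩
    by_cases hp : x ∈ P.points
    · exact Or.inl hp
    obtain ⟨i, hi, hxi⟩ := P.exists_mem_Ioo_of_notMem_points hx hp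
    have hosc : oscillationWithin f (Icc a b) x ≤ ediam (f '' Icc (P.t i) (P.t (i + 1))) :=
      biInf_le _ (Filter.image_mem_map (mem_nhdsWithin_of_mem_nhds (Icc_mem_nhds hxi.1 hxi.2)))
    exact Or.inr (mem_biUnion (Finset.mem_filter.2 ⟨Finset.mem_range.2 hi, hcx.trans hosc⟩)
      (Ioo_subset_Icc_self hxi))
  have hvol : volume {t ∈ Icc a b | c ≤ oscillationWithin f (Icc a b) t} ≤
      ∑ i ∈ bad, ENNReal.ofReal (P.t (i + 1) - P.t i) :=
    calc _ ≤ volume (P.points ∪ ⋃ i ∈ bad, Icc (P.t i) (P.t (i + 1))) := measure_mono hcover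
      _ ≤ volume P.points + ∑ i ∈ bad, volume (Icc (P.t i) (P.t (i + 1))) :=
        (measure_union_le _ _).trans (by gcongr; exact measure_biUnion_finset_le _ _)
      _ = _ := by simp only [P.points_finite.measure_zero, Real.volume_Icc, zero_add]
  calc c * volume {t ∈ Icc a b | c ≤ oscillationWithin f (Icc a b) t}
      ≤ ∑ i ∈ bad, c * ENNReal.ofReal (P.t (i + 1) - P.t i) := by
        rw [← Finset.mul_sum]; gcongr
    _ ≤ ∑ i ∈ bad, ediam (f '' Icc (P.t i) (P.t (i + 1))) * ENNReal.ofReal (P.t (i + 1) - P.t i) :=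
        Finset.sum_le_sum fun i hi => by gcongr; exact (Finset.mem_filter.1 hi).2
    _ ≤ oscSum f P := by
        rw [oscSum_eq_sum_ediam]; exact Finset.sum_le_sum_of_subset (Finset.filter_subset _ _)

theorem DarbouxIntegrable.volume_setOf_not_continuousWithinAt (h : DarbouxIntegrable f a b) :
    volume {t ∈ Icc a b | ¬ ContinuousWithinAt f (Icc a b) t} = 0 := by
  have hnull : ∀ c : ℝ≥0∞, c ≠ 0 →
      volume {t ∈ Icc a b | c ≤ oscillationWithin f (Icc a b) t} = 0 := by
    intro c hc
    refine (mul_eq_zero.1 (le_antisymm (ENNReal.le_of_forall_pos_le_add fun ε hε _ => ?_)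
      zero_le)).resolve_left hc
    obtain ⟨P, hP⟩ := h ε (by exact_mod_cast hε)
    simpa using (mul_volume_le_oscSum P c).trans (hP P subset_rfl).le
  have hsub : {t ∈ Icc a b | ¬ ContinuousWithinAt f (Icc a b) t} ⊆
      ⋃ n : ℕ, {t ∈ Icc a b | (n : ℝ≥0∞)⁻¹ ≤ oscillationWithin f (Icc a b) t} := by
    rintro x ⟨hx, hdisc⟩
    obtain ⟨n, hn⟩ := ENNReal.exists_inv_nat_lt fun h0 =>
      hdisc ((OscillationWithin.eq_zero_iff_continuousWithinAt f hx).1 h0)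
    exact mem_iUnion.2 ⟨n, hx, hn.le⟩
  exact measure_mono_null hsub (measure_iUnion_null fun n =>
    hnull _ (ENNReal.inv_ne_zero.2 (ENNReal.natCast_ne_top n)))

theorem DarbouxIntegrable.isBounded_image (h : DarbouxIntegrable f a b) :
    Bornology.IsBounded (f '' Icc a b) := by
  obtain ⟨P, hP⟩ := h 1 one_pos
  have hfin := ENNReal.sum_ne_top.1
    ((oscSum_eq_sum_ediam P).symm.trans_lt (hP P subset_rfl)).ne_top
  refine ((Bornology.isBounded_biUnion_finset _).2 fun i hi => ?_).subset
    ((image_mono P.Icc_subset_biUnion_Icc).trans_eq (image_iUnion₂ _ _))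
  refine isBounded_iff_ediam_ne_top.2 fun htop => hfin i hi ?_
  rw [htop, ENNReal.top_mul (ENNReal.ofReal_pos.2 (sub_pos.2 (P.mono i
    (Finset.mem_range.1 hi)))).ne']

theorem oscSum_le_of_meshLT {P : TaggedPartition a b} {U : Set ℝ} {δ : ℝ} {e : ℝ≥0∞}
    (hU : ∀ x ∈ Icc a b \ U, ediam (f '' (eball x (ENNReal.ofReal δ) ∩ Icc a b)) ≤ e)
    (hP : P.MeshLT δ) :
    oscSum f P ≤ e * ENNReal.ofReal (b - a) + ediam (f '' Icc a b) * volume U := by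
  classical
  rw [oscSum_eq_sum_ediam, ← Finset.sum_filter_not_add_sum_filter (Finset.range P.n)
    fun i => Icc (P.t i) (P.t (i + 1)) ⊆ U]
  gcongr
  · rw [← Real.volume_Ioc]
    refine P.sum_mul_length_le (Finset.filter_subset _ _) (fun i hi => ?_) fun i hi => ?_
    · have hi := Finset.mem_range.1 (Finset.mem_filter.1 hi).1
      exact Ioc_subset_Ioc (P.t_mem_Icc hi.le).1 (P.t_mem_Icc hi).2
    obtain ⟨hi, hnot⟩ := Finset.mem_filter.1 hi
    have hi := Finset.mem_range.1 hi
    obtain ⟨x, hxi, hxU⟩ := not_subset.1 hnot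
    have hball : Icc (P.t i) (P.t (i + 1)) ⊆ eball x (ENNReal.ofReal δ) ∩ Icc a b := by
      refine fun y hy => ⟨?_, P.Icc_subset hi hy⟩
      rw [mem_eball, edist_dist, Real.dist_eq,
        ENNReal.ofReal_lt_ofReal_iff (by linarith [hP i hi, P.mono i hi]), abs_sub_lt_iff]
      constructor <;> linarith [hP i hi, hy.1, hy.2, hxi.1, hxi.2]
    exact (ediam_mono (image_mono hball)).trans (hU x ⟨P.Icc_subset hi hxi, hxU⟩)
  · refine P.sum_mul_length_le (Finset.filter_subset _ _)
      (fun i hi => Ioc_subset_Icc_self.trans (Finset.mem_filter.1 hi).2) fun i hi => ?_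
    exact ediam_mono (image_mono (P.Icc_subset (Finset.mem_range.1 (Finset.mem_filter.1 hi).1)))

theorem darbouxIntegrable_of_isBounded_of_volume_eq_zero (hab : a < b)
    (hbdd : Bornology.IsBounded (f '' Icc a b))
    (hnull : volume {t ∈ Icc a b | ¬ ContinuousWithinAt f (Icc a b) t} = 0) :
    DarbouxIntegrable f a b := by
  intro ε hε
  set ε₂ := ENNReal.ofReal ε / 2
  have hε₂ : ε₂ ≠ 0 := by simp [ε₂, hε]
  -- If `f` is constant on `[a,b]` the bound `ε₂ / 0 = ⊤` leaves `U` free, as it should.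
  obtain ⟨U, hDU, hU, hUvol⟩ := exists_isOpen_lt_of_lt _ (ε₂ / ediam (f '' Icc a b))
    (hnull ▸ ENNReal.div_pos hε₂ hbdd.ediam_ne_top)
  have hosc : ∀ x ∈ Icc a b \ U,
      oscillationWithin f (Icc a b) x < ε₂ / ENNReal.ofReal (b - a) := by
    intro x hx
    have hcont : ContinuousWithinAt f (Icc a b) x := not_not.1 fun h => hx.2 (hDU ⟨hx.1, h⟩)
    rw [hcont.oscillationWithin_eq_zero]
    exact ENNReal.div_pos hε₂ ENNReal.ofReal_ne_top
  obtain ⟨δ, hδ, hδU⟩ := (isCompact_Icc.diff hU).uniform_oscillationWithin hosc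
  obtain ⟨P₀, hP₀⟩ := TaggedPartition.exists_meshLT hab hδ
  refine ⟨P₀, fun P hP => ?_⟩
  calc oscSum f P
      ≤ ε₂ / ENNReal.ofReal (b - a) * ENNReal.ofReal (b - a) + ediam (f '' Icc a b) * volume U :=
        oscSum_le_of_meshLT hδU (hP₀.of_points_subset P hP)
    _ < ε₂ + ε₂ := by
        rw [ENNReal.div_mul_cancel (ENNReal.ofReal_pos.2 (sub_pos.2 hab)).ne'
          ENNReal.ofReal_ne_top]
        exact ENNReal.add_lt_add_left (ENNReal.div_ne_top ENNReal.ofReal_ne_top two_ne_zero)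
          (ENNReal.mul_lt_of_lt_div' hUvol)
    _ = ENNReal.ofReal ε := ENNReal.add_halves _

end

theorem darbouxIntegrable_iff_bounded_and_ae_continuous_general
    {X : Type*} [MetricSpace X] [AddCommGroup X]
    (a b : ℝ) (hab : a < b) (f : ℝ → X) :
    DarbouxIntegrable f a b ↔
      ((∃ L, ∀ t ∈ Set.Icc a b, dist 0 (f t) ≤ L) ∧
        volume {t ∈ Set.Icc a b | ¬ ContinuousWithinAt f (Set.Icc a b) t} = 0) := by
  have hbdd : Bornology.IsBounded (f '' Icc a b) ↔ ∃ L, ∀ t ∈ Icc a b, dist 0 (f t) ≤ L := by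
    simp only [isBounded_iff_subset_closedBall (0 : X), subset_def, forall_mem_image,
      mem_closedBall, dist_comm]
  rw [← hbdd]
  exact ⟨fun h => ⟨h.isBounded_image, h.volume_setOf_not_continuousWithinAt⟩,
    fun h => darbouxIntegrable_of_isBounded_of_volume_eq_zero hab h.1 h.2⟩

/-- `f` is Darboux integrable iff `f` is bounded and continuous
almost everywhere on `[a,b]`. -/
theorem darbouxIntegrable_iff_bounded_and_ae_continuous
    {X : Type*} [MetricSpace X] [AddCommGroup X] [Module ℝ X] [CompleteSpace X]
    (hinv : ∀ x y z : X, dist (x + z) (y + z) = dist x y)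
    (a b : ℝ) (hab : a < b) (f : ℝ → X) :
    DarbouxIntegrable f a b ↔
      ((∃ L, ∀ t ∈ Set.Icc a b, dist 0 (f t) ≤ L) ∧
        volume {t ∈ Set.Icc a b | ¬ ContinuousWithinAt f (Set.Icc a b) t} = 0) :=
  darbouxIntegrable_iff_bounded_and_ae_continuous_general a b hab f
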